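/- arXiv:2112.05894 — 5 statements merged into one kernel-verified Lean document; each statement's English description precedes it below -/
import Mathlib

section
/- In the setup below, let φ : ℂ[X_J : J ∈ 𝒥] → ℂ[{z_p}_{p∈P}, t] be the ℂ-algebra homomorphism of polynomial rings determined by φ(X_J) = t·∏_{p ∈ max_{<'} J} z_p. Then the kernel of φ is generated, as an ideal, by the binomials X_{J1}·X_{J2} − X_{J1 ∪ J2}·X_{J1 *' J2} where J1, J2 range over pairs of order ideals in 𝒥 that are incomparable with respect to inclusion (J1 ⊄ J2 and J2 ⊄ J1). -/
open Pointwise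

/-- `J` is an order ideal (lower set) with respect to the strict order relation `r`. -/
def IsLowerIdeal {P : Type*} (r : P → P → Prop) (J : Set P) : Prop :=
  ∀ ⦃p q : P⦄, r p q → q ∈ J → p ∈ J

/-- The set of `r`-maximal elements of `J`. -/
def maxElems {P : Type*} (r : P → P → Prop) (J : Set P) : Set P :=
  {p ∈ J | ∀ q ∈ J, ¬ r p q}

/-- The 0/1 indicator vector of `A ⊆ P`, as a point of `ℝ^P`. -/
noncomputable def ind {P : Type*} (A : Set P) : P → ℝ :=
  A.indicator 1

/-- The order ideal of `(P, r)` generated by `A`. -/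
def genIdeal {P : Type*} (r : P → P → Prop) (A : Set P) : Set P :=
  {p | ∃ q ∈ A, p = q ∨ r p q}

/-- The Hibi–Li operation `J1 *' J2` relative to the order `r`: the order ideal of `(P, r)`
generated by `(J1 ∩ J2) ∩ (max_r J1 ∪ max_r J2)`. -/
def starOp {P : Type*} (r : P → P → Prop) (J1 J2 : Set P) : Set P :=
  genIdeal r ((J1 ∩ J2) ∩ (maxElems r J1 ∪ maxElems r J2))

/-- The relative poset polytope `R(P, lt, lt')`: the convex hull of the points
`1_{max_{lt'} J}` over all order ideals `J` of `(P, lt)`. -/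
noncomputable def RPP {P : Type*} (lt lt' : P → P → Prop) : Set (P → ℝ) :=
  convexHull ℝ {x | ∃ J : Set P, IsLowerIdeal lt J ∧ x = ind (maxElems lt' J)}

/-- The dilation `m·Q = {m·x : x ∈ Q}`. -/
def dilate {P : Type*} (m : ℕ) (Q : Set (P → ℝ)) : Set (P → ℝ) :=
  (fun x => (m : ℝ) • x) '' Q

/-- The order polytope of `(P, lt)`. -/
def orderPolytope {P : Type*} (lt : P → P → Prop) : Set (P → ℝ) :=
  {x | (∀ p, 0 ≤ x p ∧ x p ≤ 1) ∧ ∀ p q, lt q p → x p ≤ x q}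

/-- The chain polytope of `(P, lt)`. -/
def chainPolytope {P : Type*} (lt : P → P → Prop) : Set (P → ℝ) :=
  {x | (∀ p, 0 ≤ x p) ∧ ∀ (k : ℕ) (c : Fin k → P),
    (∀ i j : Fin k, i < j → lt (c i) (c j)) → (∑ i, x (c i)) ≤ 1}

/-!
`φ` sends each monomial in the `X_J` to a monomial in `t` and the `z_p`, so its kernel is
spanned by the given binomials once three facts are known. They lie in the kernel, because
`max J₁ + max J₂ = max (J₁ ∪ J₂) + max (J₁ *' J₂)` as multisets. Every monomial is congruent
modulo them to a monomial supported on a chain of ideals: a binomial move replaces an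
incomparable pair `J₁, J₂` by `J₁ ∪ J₂ ⊋ J₁, J₂` and `J₁ *' J₂`, which strictly increases
`∑ 2 ^ |J|`, a quantity bounded in fixed degree. Finally, `φ` is injective on chain
monomials: the largest ideal of the chain is the order ideal generated by the `z_p` occurring
in the image, so it can be peeled off.
-/

section OrderIdeals

variable {P : Type*} {r : P → P → Prop}

theorem maxElems_subset (J : Set P) : maxElems r J ⊆ J := fun _ hp => hp.1

theorem exists_mem_maxElems [Finite P] (hirr : ∀ p, ¬ r p p)
    (htr : ∀ a b c, r a b → r b c → r a c) {J : Set P} {p : P} (hp : p ∈ J) :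
    ∃ q ∈ maxElems r J, p = q ∨ r p q := by
  have : IsTrans P (flip r) := ⟨fun a b c hab hbc => htr c b a hbc hab⟩
  have : Std.Irrefl (flip r) := ⟨hirr⟩
  obtain ⟨q, ⟨hqJ, hpq⟩, hmax⟩ := (Finite.wellFounded_of_trans_of_irrefl (flip r)).has_min
    {q | q ∈ J ∧ (p = q ∨ r p q)} ⟨p, hp, Or.inl rfl⟩
  refine ⟨q, ⟨hqJ, fun q' hq' hqq' => hmax q' ⟨hq', Or.inr ?_⟩ hqq'⟩, hpq⟩
  rcases hpq with rfl | hpq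
  exacts [hqq', htr _ _ _ hpq hqq']

variable {lt : P → P → Prop}

theorem IsLowerIdeal.union {J₁ J₂ : Set P} (h₁ : IsLowerIdeal lt J₁) (h₂ : IsLowerIdeal lt J₂) :
    IsLowerIdeal lt (J₁ ∪ J₂) := fun _ _ hpq hq => hq.imp (h₁ hpq) (h₂ hpq)

theorem genIdeal_maxElems [Finite P] (hirr : ∀ p, ¬ r p p)
    (htr : ∀ a b c, r a b → r b c → r a c) (hweak : ∀ p q, r p q → lt p q)
    {J : Set P} (hJ : IsLowerIdeal lt J) : genIdeal lt (maxElems r J) = J := by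
  refine subset_antisymm ?_ fun p hp => ?_
  · rintro p ⟨q, hq, rfl | hpq⟩
    exacts [hq.1, hJ hpq hq.1]
  · obtain ⟨q, hq, hpq⟩ := exists_mem_maxElems hirr htr hp
    exact ⟨q, hq, hpq.imp_right (hweak p q)⟩

theorem maxElems_union (hweak : ∀ p q, r p q → lt p q) {J₁ J₂ : Set P}
    (h₁ : IsLowerIdeal lt J₁) (h₂ : IsLowerIdeal lt J₂) :
    maxElems r (J₁ ∪ J₂) =
      (maxElems r J₁ \ J₂) ∪ (maxElems r J₂ \ J₁) ∪ (maxElems r J₁ ∩ maxElems r J₂) := by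
  ext p
  simp only [maxElems, Set.mem_union, Set.mem_ofPred_eq, Set.mem_sdiff, Set.mem_inter_iff]
  constructor
  · rintro ⟨hp, hmax⟩
    have hmax₁ : ∀ q ∈ J₁, ¬ r p q := fun q hq => hmax q (Or.inl hq)
    have hmax₂ : ∀ q ∈ J₂, ¬ r p q := fun q hq => hmax q (Or.inr hq)
    by_cases hp₁ : p ∈ J₁ <;> by_cases hp₂ : p ∈ J₂ <;> simp_all
  · rintro ((⟨⟨hp, hmax⟩, hp₂⟩ | ⟨⟨hp, hmax⟩, hp₁⟩) | ⟨⟨hp, hmax₁⟩, -, hmax₂⟩)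
    · exact ⟨Or.inl hp, fun q hq hpq => hq.elim (hmax q · hpq) (hp₂ <| h₂ (hweak p q hpq) ·)⟩
    · exact ⟨Or.inr hp, fun q hq hpq => hq.elim (hp₁ <| h₁ (hweak p q hpq) ·) (hmax q · hpq)⟩
    · exact ⟨Or.inl hp, fun q hq hpq => hq.elim (hmax₁ q · hpq) (hmax₂ q · hpq)⟩

theorem maxElems_starOp (htr : ∀ a b c, r a b → r b c → r a c) (J₁ J₂ : Set P) :
    maxElems r (starOp r J₁ J₂) = J₁ ∩ J₂ ∩ (maxElems r J₁ ∪ maxElems r J₂) := by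
  ext p
  refine ⟨fun ⟨⟨q, hq, hpq⟩, hmax⟩ => ?_, fun hp => ⟨⟨p, hp, Or.inl rfl⟩, ?_⟩⟩
  · rcases hpq with rfl | hpq
    exacts [hq, (hmax q ⟨q, hq, Or.inl rfl⟩ hpq).elim]
  · rintro q ⟨s, hs, hqs⟩ hpq
    have hps : r p s := hqs.elim (· ▸ hpq) (htr p q s hpq)
    exact hp.2.elim (fun hm => hm.2 s hs.1.1 hps) (fun hm => hm.2 s hs.1.2 hps)

theorem maxElems_union_union_maxElems_starOp (htr : ∀ a b c, r a b → r b c → r a c)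
    (hweak : ∀ p q, r p q → lt p q) {J₁ J₂ : Set P}
    (h₁ : IsLowerIdeal lt J₁) (h₂ : IsLowerIdeal lt J₂) :
    maxElems r (J₁ ∪ J₂) ∪ maxElems r (starOp r J₁ J₂) = maxElems r J₁ ∪ maxElems r J₂ := by
  have := maxElems_subset (r := r) J₁
  have := maxElems_subset (r := r) J₂
  rw [maxElems_union hweak h₁ h₂, maxElems_starOp htr]
  ext p
  simp only [Set.mem_union, Set.mem_sdiff, Set.mem_inter_iff]
  tauto

theorem maxElems_union_inter_maxElems_starOp (htr : ∀ a b c, r a b → r b c → r a c)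
    (hweak : ∀ p q, r p q → lt p q) {J₁ J₂ : Set P}
    (h₁ : IsLowerIdeal lt J₁) (h₂ : IsLowerIdeal lt J₂) :
    maxElems r (J₁ ∪ J₂) ∩ maxElems r (starOp r J₁ J₂) = maxElems r J₁ ∩ maxElems r J₂ := by
  have := maxElems_subset (r := r) J₁
  have := maxElems_subset (r := r) J₂
  rw [maxElems_union hweak h₁ h₂, maxElems_starOp htr]
  ext p
  simp only [Set.mem_union, Set.mem_sdiff, Set.mem_inter_iff]
  tauto

theorem genIdeal_biUnion_maxElems [Finite P] (hirr : ∀ p, ¬ r p p)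
    (htr : ∀ a b c, r a b → r b c → r a c) (hweak : ∀ p q, r p q → lt p q)
    {ι : Type*} {s : Set ι} {J : ι → Set P} {m : ι} (hm : m ∈ s) (hle : ∀ i ∈ s, J i ⊆ J m)
    (hlow : IsLowerIdeal lt (J m)) :
    genIdeal lt (⋃ i ∈ s, maxElems r (J i)) = J m := by
  refine subset_antisymm ?_ ?_
  · rintro p ⟨q, hq, hpq⟩
    obtain ⟨i, hi, hqi⟩ := Set.mem_iUnion₂.1 hq
    have hqm : q ∈ J m := hle i hi hqi.1
    rcases hpq with rfl | hpq
    exacts [hqm, hlow hpq hqm]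
  · conv_lhs => rw [← genIdeal_maxElems hirr htr hweak hlow]
    rintro p ⟨q, hq, hpq⟩
    exact ⟨q, Set.mem_biUnion hm hq, hpq⟩

end OrderIdeals

namespace MvPolynomial

variable {σ τ : Type*} (v : σ → τ →₀ ℕ)

section CommSemiring

variable {R : Type*} [CommSemiring R]

theorem aeval_monomial_one_monomial (d : σ →₀ ℕ) (c : R) :
    aeval (fun i => (monomial (v i) 1 : MvPolynomial τ R)) (monomial d c) =
      monomial (Finsupp.weight v d) c := by
  simp only [aeval_monomial, Finsupp.weight_apply, monomial_finsupp_sum_index, algebraMap_eq,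
    monomial_pow, one_pow]

theorem coeff_weight_aeval_monomial_one {S : Set (σ →₀ ℕ)}
    (hinj : S.InjOn (Finsupp.weight v)) {p : MvPolynomial σ R} (hp : ↑p.support ⊆ S)
    {d : σ →₀ ℕ} (hd : d ∈ p.support) :
    coeff (Finsupp.weight v d) (aeval (fun i => (monomial (v i) 1 : MvPolynomial τ R)) p) =
      coeff d p := by
  classical
  conv_lhs => rw [p.as_sum]
  simp only [map_sum, aeval_monomial_one_monomial, coeff_sum, coeff_monomial]
  rw [Finset.sum_eq_single d (fun e he hne => if_neg fun h => hne (hinj (hp he) (hp hd) h))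
    (absurd hd), if_pos rfl]

theorem eq_zero_of_aeval_monomial_one_eq_zero {S : Set (σ →₀ ℕ)}
    (hinj : S.InjOn (Finsupp.weight v)) {p : MvPolynomial σ R} (hp : ↑p.support ⊆ S)
    (h : aeval (fun i => (monomial (v i) 1 : MvPolynomial τ R)) p = 0) : p = 0 := by
  ext d
  by_cases hd : d ∈ p.support
  · rw [← coeff_weight_aeval_monomial_one v hinj hp hd, h, coeff_zero, coeff_zero]
  · exact notMem_support_iff.1 hd

end CommSemiring

theorem ker_aeval_monomial_one_eq {R : Type*} [CommRing R] {I : Ideal (MvPolynomial σ R)}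
    (hI : I ≤ RingHom.ker (aeval fun i => (monomial (v i) 1 : MvPolynomial τ R)))
    {S : Set (σ →₀ ℕ)} (hS : ∀ d, ∃ e ∈ S, monomial d (1 : R) - monomial e 1 ∈ I)
    (hinj : S.InjOn (Finsupp.weight v)) :
    RingHom.ker (aeval fun i => (monomial (v i) 1 : MvPolynomial τ R)) = I := by
  classical
  refine le_antisymm (fun f hf => ?_) hI
  choose ν hνS hν using hS
  set g := ∑ d ∈ f.support, monomial (ν d) (coeff d f)
  have hfg : f - g ∈ I := by
    have : f - g = ∑ d ∈ f.support, C (coeff d f) * (monomial d 1 - monomial (ν d) 1) := by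
      conv_lhs => rw [f.as_sum]
      simp only [g, ← Finset.sum_sub_distrib, mul_sub, C_mul_monomial, mul_one]
    rw [this]
    exact I.sum_mem fun d _ => I.mul_mem_left _ (hν d)
  have hg : g = 0 := by
    refine eq_zero_of_aeval_monomial_one_eq_zero v hinj (fun e he => ?_) ?_
    · obtain ⟨d, -, hd⟩ := Finset.mem_biUnion.1 (support_sum he)
      exact Finset.mem_singleton.1 (support_monomial_subset hd) ▸ hνS d
    · exact RingHom.mem_ker.1 (sub_sub_cancel f g ▸ sub_mem hf (hI hfg))
  simpa [hg] using hfg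

end MvPolynomial

theorem IsChain.exists_isGreatest {α : Type*} [PartialOrder α] {s : Set α}
    (hc : IsChain (· ≤ ·) s) (hfin : s.Finite) (hne : s.Nonempty) : ∃ m, IsGreatest s m := by
  obtain ⟨m, hm⟩ := hfin.exists_maximal hne
  exact ⟨m, hm.prop, fun a ha => (hc.total ha hm.prop).elim id fun h => (hm.eq_of_le ha h) ▸ le_rfl⟩

theorem Finsupp.sub_single_one_add_single_one {α : Type*} {d : α →₀ ℕ} {a : α}
    (ha : a ∈ d.support) : d - single a 1 + single a 1 = d :=
  tsub_add_cancel_of_le (single_le_iff.2 (Nat.one_le_iff_ne_zero.2 (mem_support_iff.1 ha)))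

theorem two_pow_ncard_add_two_pow_ncard_le {α : Type*} {A B : Set α} (hA : A.Finite)
    (hB : B.Finite) (hAB : ¬ A ⊆ B) (hBA : ¬ B ⊆ A) :
    2 ^ A.ncard + 2 ^ B.ncard ≤ 2 ^ (A ∪ B).ncard := by
  have hA' : A.ncard < (A ∪ B).ncard :=
    Set.ncard_lt_ncard (Set.ssubset_union_left_iff.2 hBA) (hA.union hB)
  have hB' : B.ncard < (A ∪ B).ncard :=
    Set.ncard_lt_ncard (Set.ssubset_union_right_iff.2 hAB) (hA.union hB)
  calc 2 ^ A.ncard + 2 ^ B.ncard ≤ 2 ^ ((A ∪ B).ncard - 1) + 2 ^ ((A ∪ B).ncard - 1) :=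
        add_le_add (Nat.pow_le_pow_right two_pos (by omega))
          (Nat.pow_le_pow_right two_pos (by omega))
    _ = 2 ^ (A ∪ B).ncard := by rw [← two_mul, ← pow_succ', Nat.sub_add_cancel (by omega)]

section HibiRing

open MvPolynomial

variable {P : Type*} {lt lt' : P → P → Prop}

abbrev LowerIdeals (lt : P → P → Prop) := {J : Set P // IsLowerIdeal lt J}

noncomputable def hibiExponent [Finite P] (lt' : P → P → Prop) (J : Set P) : P ⊕ Unit →₀ ℕ :=
  Finsupp.single (Sum.inr ()) 1 +
    ∑ p ∈ (Set.toFinite (maxElems lt' J)).toFinset, Finsupp.single (Sum.inl p) 1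

def hibiBinomials (R : Type*) [CommRing R] (lt lt' : P → P → Prop) :
    Set (MvPolynomial (LowerIdeals lt) R) :=
  {f | ∃ J1 J2 J3 J4 : LowerIdeals lt,
    ¬ J1.1 ⊆ J2.1 ∧ ¬ J2.1 ⊆ J1.1 ∧ J3.1 = J1.1 ∪ J2.1 ∧ J4.1 = starOp lt' J1.1 J2.1 ∧
    f = X J1 * X J2 - X J3 * X J4}

variable [Finite P]

theorem X_mul_prod_X_eq_monomial_hibiExponent {R : Type*} [CommSemiring R] (J : Set P) :
    (X (Sum.inr ()) * ∏ p ∈ (Set.toFinite (maxElems lt' J)).toFinset, X (Sum.inl p) :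
      MvPolynomial (P ⊕ Unit) R) = monomial (hibiExponent lt' J) 1 := by
  rw [hibiExponent, ← mul_one (1 : R), ← monomial_mul, monomial_sum_one]
  rfl

theorem hibiExponent_inr (J : Set P) : hibiExponent lt' J (Sum.inr ()) = 1 := by
  simp [hibiExponent]

theorem hibiExponent_inl_ne_zero {J : Set P} {p : P} :
    hibiExponent lt' J (Sum.inl p) ≠ 0 ↔ p ∈ maxElems lt' J := by
  classical
  simp [hibiExponent, Finsupp.single_apply]

theorem hibiExponent_add_hibiExponent (htr : ∀ a b c, lt' a b → lt' b c → lt' a c)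
    (hweak : ∀ p q, lt' p q → lt p q) {J₁ J₂ : Set P}
    (h₁ : IsLowerIdeal lt J₁) (h₂ : IsLowerIdeal lt J₂) :
    hibiExponent lt' J₁ + hibiExponent lt' J₂ =
      hibiExponent lt' (J₁ ∪ J₂) + hibiExponent lt' (starOp lt' J₁ J₂) := by
  have hsum : ∀ A B C D : Set P, A ∪ B = C ∪ D → A ∩ B = C ∩ D →
      ∑ p ∈ (Set.toFinite A).toFinset, Finsupp.single (Sum.inl p : P ⊕ Unit) 1 +
        ∑ p ∈ (Set.toFinite B).toFinset, Finsupp.single (Sum.inl p) 1 =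
      ∑ p ∈ (Set.toFinite C).toFinset, Finsupp.single (Sum.inl p) 1 +
        ∑ p ∈ (Set.toFinite D).toFinset, Finsupp.single (Sum.inl p) 1 := by
    intro A B C D hu hi
    simp only [← finsum_mem_eq_finite_toFinset_sum]
    rw [← finsum_mem_union_inter (Set.toFinite A) (Set.toFinite B), hu, hi,
      finsum_mem_union_inter (Set.toFinite C) (Set.toFinite D)]
  rw [hibiExponent, hibiExponent, hibiExponent, hibiExponent, add_add_add_comm,
    hsum _ _ _ _ (maxElems_union_union_maxElems_starOp htr hweak h₁ h₂).symm
      (maxElems_union_inter_maxElems_starOp htr hweak h₁ h₂).symm, add_add_add_comm]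

theorem hibiBinomials_subset_ker {R : Type*} [CommRing R]
    (htr : ∀ a b c, lt' a b → lt' b c → lt' a c) (hweak : ∀ p q, lt' p q → lt p q) :
    Ideal.span (hibiBinomials R lt lt') ≤
      RingHom.ker (aeval fun J : LowerIdeals lt => (monomial (hibiExponent lt' J.1) 1 :
        MvPolynomial (P ⊕ Unit) R)) := by
  rw [Ideal.span_le]
  rintro f ⟨J₁, J₂, J₃, J₄, -, -, h₃, h₄, rfl⟩
  rw [SetLike.mem_coe, RingHom.mem_ker, map_sub, sub_eq_zero]
  simp only [map_mul, aeval_X, monomial_mul, mul_one, h₃, h₄,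
    hibiExponent_add_hibiExponent htr hweak J₁.2 J₂.2]

theorem weight_hibiExponent_inr (d : LowerIdeals lt →₀ ℕ) :
    Finsupp.weight (fun J : LowerIdeals lt => hibiExponent lt' J.1) d (Sum.inr ()) = d.degree := by
  simp [Finsupp.weight_apply, Finsupp.sum, Finsupp.finsetSum_apply, hibiExponent_inr,
    Finsupp.degree_apply]

theorem weight_hibiExponent_inl_ne_zero {d : LowerIdeals lt →₀ ℕ} {p : P} :
    Finsupp.weight (fun J : LowerIdeals lt => hibiExponent lt' J.1) d (Sum.inl p) ≠ 0 ↔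
      ∃ J ∈ d.support, p ∈ maxElems lt' J.1 := by
  simp [Finsupp.weight_apply, Finsupp.sum, Finsupp.finsetSum_apply, Finset.sum_eq_zero_iff,
    hibiExponent_inl_ne_zero]

theorem genIdeal_weight_hibiExponent (hirr : ∀ p, ¬ lt' p p)
    (htr : ∀ a b c, lt' a b → lt' b c → lt' a c) (hweak : ∀ p q, lt' p q → lt p q)
    {d : LowerIdeals lt →₀ ℕ} {m : LowerIdeals lt} (hm : IsGreatest (d.support : Set _) m) :
    genIdeal lt {p | Finsupp.weight (fun J : LowerIdeals lt => hibiExponent lt' J.1) d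
      (Sum.inl p) ≠ 0} = m.1 := by
  have hsupp : {p | Finsupp.weight (fun J : LowerIdeals lt => hibiExponent lt' J.1) d
      (Sum.inl p) ≠ 0} = ⋃ J ∈ (d.support : Set (LowerIdeals lt)), maxElems lt' J.1 := by
    ext p
    simp [weight_hibiExponent_inl_ne_zero]
  rw [hsupp]
  exact genIdeal_biUnion_maxElems hirr htr hweak hm.1 (fun J hJ => hm.2 hJ) m.2

theorem injOn_weight_hibiExponent (hirr : ∀ p, ¬ lt' p p)
    (htr : ∀ a b c, lt' a b → lt' b c → lt' a c) (hweak : ∀ p q, lt' p q → lt p q) :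
    {d : LowerIdeals lt →₀ ℕ | IsChain (· ≤ ·) (d.support : Set (LowerIdeals lt))}.InjOn
      (Finsupp.weight fun J : LowerIdeals lt => hibiExponent lt' J.1) := by
  intro d hd e he hde
  obtain ⟨n, hn⟩ : ∃ n, d.degree = n := ⟨_, rfl⟩
  have hen : e.degree = n := by
    rw [← weight_hibiExponent_inr (lt' := lt'), ← hde, weight_hibiExponent_inr, hn]
  induction n generalizing d e with
  | zero => rw [(Finsupp.degree_eq_zero_iff d).1 hn, (Finsupp.degree_eq_zero_iff e).1 hen]
  | succ n ih =>
    have greatest : ∀ c : LowerIdeals lt →₀ ℕ, c.degree = n + 1 →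
        IsChain (· ≤ ·) (c.support : Set (LowerIdeals lt)) →
        ∃ m, IsGreatest (c.support : Set (LowerIdeals lt)) m := fun c hc hchain =>
      hchain.exists_isGreatest c.support.finite_toSet (Finset.coe_nonempty.2
        (Finsupp.support_nonempty_iff.2 fun h => by simp [h] at hc))
    obtain ⟨m, hm⟩ := greatest d hn hd
    obtain ⟨m', hm'⟩ := greatest e hen he
    obtain rfl : m = m' := Subtype.ext <| by
      rw [← genIdeal_weight_hibiExponent hirr htr hweak hm,
        ← genIdeal_weight_hibiExponent hirr htr hweak hm', hde]
    set d' := d - Finsupp.single m 1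
    set e' := e - Finsupp.single m 1
    have hd' : d' + Finsupp.single m 1 = d := Finsupp.sub_single_one_add_single_one hm.1
    have he' : e' + Finsupp.single m 1 = e := Finsupp.sub_single_one_add_single_one hm'.1
    have hdeg : ∀ c : LowerIdeals lt →₀ ℕ, (c + Finsupp.single m 1).degree = n + 1 →
        c.degree = n := fun c hc => by
      rw [map_add, Finsupp.degree_single] at hc
      omega
    have hde' : Finsupp.weight (fun J : LowerIdeals lt => hibiExponent lt' J.1) d' =
        Finsupp.weight (fun J : LowerIdeals lt => hibiExponent lt' J.1) e' :=
      add_right_cancel (by rw [← map_add, ← map_add, hd', he', hde])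
    rw [← hd', ← he', show d' = e' from ih (hd.mono (Finset.coe_subset.2 Finsupp.support_tsub))
      (he.mono (Finset.coe_subset.2 Finsupp.support_tsub)) hde' (hdeg d' (hd' ▸ hn))
      (hdeg e' (he' ▸ hen))]

theorem weight_two_pow_ncard_le (d : LowerIdeals lt →₀ ℕ) :
    Finsupp.weight (fun J : LowerIdeals lt => 2 ^ J.1.ncard) d ≤ 2 ^ Nat.card P * d.degree := by
  rw [Finsupp.weight_apply, Finsupp.sum, Finsupp.degree_apply, Finset.mul_sum]
  gcongr with J
  rw [smul_eq_mul, mul_comm]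
  gcongr
  · exact one_le_two
  · exact Set.ncard_le_card J.1

theorem exists_monomial_sub_mem_span_hibiBinomials_of_not_isChain {R : Type*} [CommRing R]
    (hstar : ∀ J₁ J₂ : Set P, IsLowerIdeal lt J₁ → IsLowerIdeal lt J₂ →
      IsLowerIdeal lt (starOp lt' J₁ J₂))
    {d : LowerIdeals lt →₀ ℕ} (hd : ¬ IsChain (· ≤ ·) (d.support : Set (LowerIdeals lt))) :
    ∃ e : LowerIdeals lt →₀ ℕ, e.degree = d.degree ∧
      Finsupp.weight (fun J : LowerIdeals lt => 2 ^ J.1.ncard) d <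
        Finsupp.weight (fun J : LowerIdeals lt => 2 ^ J.1.ncard) e ∧
      monomial d (1 : R) - monomial e 1 ∈ Ideal.span (hibiBinomials R lt lt') := by
  simp only [IsChain, Set.Pairwise, not_forall, not_or] at hd
  obtain ⟨J₁, hJ₁, J₂, hJ₂, hne, h₁₂, h₂₁⟩ := hd
  set J₃ : LowerIdeals lt := ⟨J₁.1 ∪ J₂.1, J₁.2.union J₂.2⟩
  set J₄ : LowerIdeals lt := ⟨starOp lt' J₁.1 J₂.1, hstar _ _ J₁.2 J₂.2⟩
  set c := d - Finsupp.single J₁ 1 - Finsupp.single J₂ 1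
  have hc : c + Finsupp.single J₂ 1 + Finsupp.single J₁ 1 = d := by
    rw [Finsupp.sub_single_one_add_single_one, Finsupp.sub_single_one_add_single_one hJ₁]
    simpa [Finsupp.single_apply, hne] using hJ₂
  refine ⟨c + Finsupp.single J₃ 1 + Finsupp.single J₄ 1, ?_, ?_, ?_⟩
  · simp only [← hc, map_add, Finsupp.degree_single]
  · have : 2 ^ J₁.1.ncard + 2 ^ J₂.1.ncard ≤ 2 ^ J₃.1.ncard :=
      two_pow_ncard_add_two_pow_ncard_le (Set.toFinite J₁.1) (Set.toFinite J₂.1) h₁₂ h₂₁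
    have : 0 < 2 ^ J₄.1.ncard := by positivity
    simp only [← hc, map_add, Finsupp.weight_single, smul_eq_mul, one_mul]
    omega
  · have hbin : monomial d (1 : R) - monomial (c + Finsupp.single J₃ 1 + Finsupp.single J₄ 1) 1 =
        monomial c 1 * (X J₁ * X J₂ - X J₃ * X J₄) := by
      simp only [← hc, monomial_add_single, pow_one]
      ring
    rw [hbin]
    exact Ideal.mul_mem_left _ _ (Ideal.subset_span ⟨J₁, J₂, J₃, J₄, h₁₂, h₂₁, rfl, rfl, rfl⟩)

theorem exists_isChain_monomial_sub_mem_span_hibiBinomials {R : Type*} [CommRing R]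
    (hstar : ∀ J₁ J₂ : Set P, IsLowerIdeal lt J₁ → IsLowerIdeal lt J₂ →
      IsLowerIdeal lt (starOp lt' J₁ J₂))
    (d : LowerIdeals lt →₀ ℕ) :
    ∃ e : LowerIdeals lt →₀ ℕ, IsChain (· ≤ ·) (e.support : Set (LowerIdeals lt)) ∧
      monomial d (1 : R) - monomial e 1 ∈ Ideal.span (hibiBinomials R lt lt') := by
  induction hN : 2 ^ Nat.card P * d.degree -
      Finsupp.weight (fun J : LowerIdeals lt => 2 ^ J.1.ncard) d
    using Nat.strong_induction_on generalizing d with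
  | _ N ih =>
    by_cases hd : IsChain (· ≤ ·) (d.support : Set (LowerIdeals lt))
    · exact ⟨d, hd, by simp⟩
    obtain ⟨e, hdeg, hlt, hde⟩ :=
      exists_monomial_sub_mem_span_hibiBinomials_of_not_isChain (R := R) hstar hd
    have := weight_two_pow_ncard_le e
    obtain ⟨f, hf, hef⟩ := ih _ (by rw [hdeg] at this ⊢; omega) e rfl
    exact ⟨f, hf, sub_add_sub_cancel (monomial d (1 : R)) (monomial e 1) (monomial f 1) ▸
      add_mem hde hef⟩

end HibiRing

open MvPolynomial

/-- `t` is `Sum.inr ()` and `z_p` is `Sum.inl p`. -/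
theorem stmt8_general {P : Type*} [Fintype P] (lt lt' : P → P → Prop)
    (hlt'irr : ∀ p, ¬ lt' p p) (hlt'tr : ∀ a b c, lt' a b → lt' b c → lt' a c)
    (hweak : ∀ p q, lt' p q → lt p q)
    (hstar : ∀ J1 J2 : Set P, IsLowerIdeal lt J1 → IsLowerIdeal lt J2 →
      IsLowerIdeal lt (starOp lt' J1 J2)) :
    RingHom.ker
      (MvPolynomial.aeval (R := ℂ)
        (fun J : {J : Set P // IsLowerIdeal lt J} =>
          (MvPolynomial.X (Sum.inr ()) *
            ∏ p ∈ (Set.toFinite (maxElems lt' J.1)).toFinset, MvPolynomial.X (Sum.inl p) :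
            MvPolynomial (P ⊕ Unit) ℂ))) =
    Ideal.span
      {f : MvPolynomial {J : Set P // IsLowerIdeal lt J} ℂ |
        ∃ J1 J2 J3 J4 : {J : Set P // IsLowerIdeal lt J},
          ¬ J1.1 ⊆ J2.1 ∧ ¬ J2.1 ⊆ J1.1 ∧
          J3.1 = J1.1 ∪ J2.1 ∧ J4.1 = starOp lt' J1.1 J2.1 ∧
          f = MvPolynomial.X J1 * MvPolynomial.X J2 -
                MvPolynomial.X J3 * MvPolynomial.X J4} := by
  simp only [X_mul_prod_X_eq_monomial_hibiExponent]
  exact ker_aeval_monomial_one_eq _ (hibiBinomials_subset_ker hlt'tr hweak)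
    (exists_isChain_monomial_sub_mem_span_hibiBinomials hstar)
    (injOn_weight_hibiExponent hlt'irr hlt'tr hweak)

/-- Let `φ : ℂ[X_J : J ∈ 𝒥] → ℂ[{z_p}_{p ∈ P}, t]` be determined by
`φ(X_J) = t · ∏_{p ∈ max_{lt'} J} z_p` (the variable `t` is `Sum.inr ()`, and `z_p` is
`Sum.inl p`).  Then `ker φ` is generated by the binomials
`X_{J1}·X_{J2} − X_{J1 ∪ J2}·X_{J1 *' J2}` over pairs of inclusion-incomparable
`J1, J2 ∈ 𝒥`. -/
theorem stmt8 {P : Type*} [Fintype P] (lt lt' : P → P → Prop)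
    (hltirr : ∀ p, ¬ lt p p) (hlttr : ∀ a b c, lt a b → lt b c → lt a c)
    (hlt'irr : ∀ p, ¬ lt' p p) (hlt'tr : ∀ a b c, lt' a b → lt' b c → lt' a c)
    (hweak : ∀ p q, lt' p q → lt p q)
    (hstar : ∀ J1 J2 : Set P, IsLowerIdeal lt J1 → IsLowerIdeal lt J2 →
      IsLowerIdeal lt (starOp lt' J1 J2)) :
    RingHom.ker
      (MvPolynomial.aeval (R := ℂ)
        (fun J : {J : Set P // IsLowerIdeal lt J} =>
          (MvPolynomial.X (Sum.inr ()) *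
            ∏ p ∈ (Set.toFinite (maxElems lt' J.1)).toFinset, MvPolynomial.X (Sum.inl p) :
            MvPolynomial (P ⊕ Unit) ℂ))) =
    Ideal.span
      {f : MvPolynomial {J : Set P // IsLowerIdeal lt J} ℂ |
        ∃ J1 J2 J3 J4 : {J : Set P // IsLowerIdeal lt J},
          ¬ J1.1 ⊆ J2.1 ∧ ¬ J2.1 ⊆ J1.1 ∧
          J3.1 = J1.1 ∪ J2.1 ∧ J4.1 = starOp lt' J1.1 J2.1 ∧
          f = MvPolynomial.X J1 * MvPolynomial.X J2 -
                MvPolynomial.X J3 * MvPolynomial.X J4} :=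
  stmt8_general lt lt' hlt'irr hlt'tr hweak hstar
end

section
/- In the setup below, if J1, J2 ∈ 𝒥 are incomparable with respect to inclusion (J1 ⊄ J2 and J2 ⊄ J1), then |P∖J1|² + |P∖J2|² < |P∖(J1 ∪ J2)|² + |P∖(J1 *' J2)|². -/
open Pointwise

/-- If `J1, J2 ∈ 𝒥` are incomparable with respect to inclusion, then
`|P∖J1|² + |P∖J2|² < |P∖(J1 ∪ J2)|² + |P∖(J1 *' J2)|²`. -/
theorem stmt9 {P : Type*} [Fintype P] (lt lt' : P → P → Prop)
    (hltirr : ∀ p, ¬ lt p p) (hlttr : ∀ a b c, lt a b → lt b c → lt a c)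
    (hlt'irr : ∀ p, ¬ lt' p p) (hlt'tr : ∀ a b c, lt' a b → lt' b c → lt' a c)
    (hweak : ∀ p q, lt' p q → lt p q)
    (hstar : ∀ J1 J2 : Set P, IsLowerIdeal lt J1 → IsLowerIdeal lt J2 →
      IsLowerIdeal lt (starOp lt' J1 J2))
    (J1 J2 : Set P) (hJ1 : IsLowerIdeal lt J1) (hJ2 : IsLowerIdeal lt J2)
    (h12 : ¬ J1 ⊆ J2) (h21 : ¬ J2 ⊆ J1) :
    (J1ᶜ.ncard) ^ 2 + (J2ᶜ.ncard) ^ 2 <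
      ((J1 ∪ J2)ᶜ.ncard) ^ 2 + ((starOp lt' J1 J2)ᶜ.ncard) ^ 2 := by
  -- starOp ⊆ J1 ∩ J2
  have hsub : starOp lt' J1 J2 ⊆ J1 ∩ J2 := by
    rintro p ⟨q, ⟨⟨hq1, hq2⟩, _⟩, hpq⟩
    rcases hpq with rfl | hpq
    · exact ⟨hq1, hq2⟩
    · exact ⟨hJ1 (hweak _ _ hpq) hq1, hJ2 (hweak _ _ hpq) hq2⟩
  set a := J1ᶜ.ncard with ha
  set b := J2ᶜ.ncard with hb
  set c := (J1 ∪ J2)ᶜ.ncard with hc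
  set d := (starOp lt' J1 J2)ᶜ.ncard with hd
  have hfin : ∀ S : Set P, S.Finite := fun S => S.toFinite
  -- c < a and c < b
  have hca : c < a := by
    apply Set.ncard_lt_ncard _ (hfin _)
    constructor
    · exact Set.compl_subset_compl.2 Set.subset_union_left
    · intro h
      obtain ⟨x, hx2, hx1⟩ := Set.not_subset.1 h21
      exact hx1 (by by_contra hx1'; exact (h hx1') (Or.inr hx2))
  have hcb : c < b := by
    apply Set.ncard_lt_ncard _ (hfin _)
    constructor
    · exact Set.compl_subset_compl.2 Set.subset_union_right
    · intro h
      obtain ⟨x, hx1, hx2⟩ := Set.not_subset.1 h12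
      exact hx2 (by by_contra hx2'; exact (h hx2') (Or.inl hx1))
  -- a + b ≤ c + d
  have hie : c + (J1 ∩ J2)ᶜ.ncard = a + b := by
    have := Set.ncard_union_add_ncard_inter J1ᶜ J2ᶜ (hfin _) (hfin _)
    rw [← Set.compl_inter, ← Set.compl_union] at this
    omega
  have hdge : (J1 ∩ J2)ᶜ.ncard ≤ d :=
    Set.ncard_le_ncard (Set.compl_subset_compl.2 hsub) (hfin _)
  have habcd : a + b ≤ c + d := by omega
  -- conclude
  zify at hca hcb habcd ⊢
  nlinarith [mul_pos (by linarith : (0:ℤ) < (a:ℤ) - c) (by linarith : (0:ℤ) < (b:ℤ) - c),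
    sq_nonneg ((d:ℤ) - (a + b - c)), sq_nonneg ((d:ℤ) + (a + b - c))]
end

section
/- In the marked setup below, for every K ∈ 𝒥*, the fundamental marked relative poset polytope R_{ω_K}(P,<,<') equals the intersection R(P,<,<') ∩ {x ∈ ℝ^P : x_p = 1 for all p ∈ K and x_p = 0 for all p ∈ P*∖K}. Moreover, this set is an exposed face of R(P,<,<'): for the linear functional ℓ(x) = Σ_{p∈K} x_p − Σ_{p∈P*∖K} x_p one has ℓ(x) ≤ |K| for all x ∈ R(P,<,<'), and R_{ω_K}(P,<,<') = {x ∈ R(P,<,<') : ℓ(x) = |K|}. -/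
open Pointwise

/-- The fundamental marked relative poset polytope `R_{ω_K}(P, lt, lt')`: the convex hull
of the points `1_{max_{lt'} J}` over order ideals `J` of `(P, lt)` with `J ∩ P* = K`. -/
noncomputable def RPPfund {P : Type*} (lt lt' : P → P → Prop) (Pstar K : Set P) :
    Set (P → ℝ) :=
  convexHull ℝ
    {x | ∃ J : Set P, IsLowerIdeal lt J ∧ J ∩ Pstar = K ∧ x = ind (maxElems lt' J)}

/-- The set `𝒥*` of order ideals of the subposet `(P*, lt)`. -/
def idealsOn {P : Type*} (lt : P → P → Prop) (Pstar : Set P) : Set (Set P) :=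
  {K | K ⊆ Pstar ∧ ∀ p q : P, p ∈ Pstar → q ∈ Pstar → lt p q → q ∈ K → p ∈ K}

/-- The marked relative poset polytope for a coefficient function `α : 𝒥* → ℕ`:
the Minkowski sum `Σ_{K ∈ 𝒥*} α_K · R_{ω_K}(P, lt, lt')`. -/
noncomputable def RPPmarked {P : Type*} [Fintype P] (lt lt' : P → P → Prop)
    (Pstar : Set P) (α : Set P → ℕ) : Set (P → ℝ) :=
  ∑ K ∈ (Set.toFinite (idealsOn lt Pstar)).toFinset, dilate (α K) (RPPfund lt lt' Pstar K)



lemma hull_face_aux {E : Type*} [AddCommGroup E] [Module ℝ E] (f : E →ₗ[ℝ] ℝ) (a : ℝ)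
    (s : Set E) (hs : ∀ v ∈ s, f v ≤ a) {x : E} (hx : x ∈ convexHull ℝ s) (hfx : f x = a) :
    x ∈ convexHull ℝ {v ∈ s | f v = a} := by
  rw [convexHull_eq] at hx
  obtain ⟨ι, t, w, z, hw0, hw1, hz, hcm⟩ := hx
  have hxs : x = ∑ i ∈ t, w i • z i := by
    rw [← hcm, Finset.centerMass_eq_of_sum_1 _ _ hw1]
  have h1 : ∑ i ∈ t, w i * f (z i) = f x := by
    rw [hxs, map_sum]; simp [smul_eq_mul]
  have h2 : ∑ i ∈ t, w i * a = a := by rw [← Finset.sum_mul, hw1, one_mul]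
  have hsum0 : ∑ i ∈ t, w i * (a - f (z i)) = 0 := by
    have : ∑ i ∈ t, w i * (a - f (z i)) = (∑ i ∈ t, w i * a) - ∑ i ∈ t, w i * f (z i) := by
      rw [← Finset.sum_sub_distrib]
      exact Finset.sum_congr rfl fun i _ => by ring
    rw [this, h1, h2, hfx, sub_self]
  have hzero : ∀ i ∈ t, w i * (a - f (z i)) = 0 :=
    (Finset.sum_eq_zero_iff_of_nonneg fun i hi =>
      mul_nonneg (hw0 i hi) (sub_nonneg.2 (hs _ (hz i hi)))).1 hsum0
  have hfa : ∀ i ∈ t, w i ≠ 0 → f (z i) = a := by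
    intro i hi hwi
    rcases mul_eq_zero.1 (hzero i hi) with h | h
    · exact absurd h hwi
    · linarith
  have hw1' : ∑ i ∈ t.filter (fun i => w i ≠ 0), w i = 1 := by
    rw [Finset.sum_filter_ne_zero, hw1]
  have hxs' : x = ∑ i ∈ t.filter (fun i => w i ≠ 0), w i • z i := by
    rw [hxs]
    refine (Finset.sum_filter_of_ne fun i hi h => ?_).symm
    intro hw; exact h (by rw [hw, zero_smul])
  have hmem := Finset.centerMass_mem_convexHull (t := t.filter fun i => w i ≠ 0)
    (w := w) (z := z) (s := {v ∈ s | f v = a})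
    (fun i hi => hw0 i (Finset.mem_filter.1 hi).1)
    (by rw [hw1']; norm_num)
    (fun i hi => ⟨hz i (Finset.mem_filter.1 hi).1,
      hfa i (Finset.mem_filter.1 hi).1 (Finset.mem_filter.1 hi).2⟩)
  rwa [Finset.centerMass_eq_of_sum_1 _ _ hw1', ← hxs'] at hmem

/-- For `K ∈ 𝒥*`, the fundamental marked relative poset polytope `R_{ω_K}(P, lt, lt')`
equals `R(P, lt, lt') ∩ {x : x_p = 1 on K, x_p = 0 on P*∖K}`; moreover it is an exposed
face of `R(P, lt, lt')`: for `ℓ(x) = Σ_{p∈K} x_p − Σ_{p∈P*∖K} x_p` one has `ℓ(x) ≤ |K|`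
on `R(P, lt, lt')`, with equality locus exactly `R_{ω_K}(P, lt, lt')`. -/
theorem stmt12 {P : Type*} [Fintype P] (lt lt' : P → P → Prop)
    (hltirr : ∀ p, ¬ lt p p) (hlttr : ∀ a b c, lt a b → lt b c → lt a c)
    (hlt'irr : ∀ p, ¬ lt' p p) (hlt'tr : ∀ a b c, lt' a b → lt' b c → lt' a c)
    (hweak : ∀ p q, lt' p q → lt p q)
    (hstar : ∀ J1 J2 : Set P, IsLowerIdeal lt J1 → IsLowerIdeal lt J2 →
      IsLowerIdeal lt (starOp lt' J1 J2))
    (Pstar : Set P)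
    (hmin : ∀ p : P, (∀ q, ¬ lt q p) → p ∈ Pstar)
    (hmax : ∀ p : P, (∀ q, ¬ lt p q) → p ∈ Pstar)
    (hiii : ∀ p ∈ Pstar, ∀ q : P, ¬ lt' p q)
    (K : Set P) (hK : K ∈ idealsOn lt Pstar) :
    RPPfund lt lt' Pstar K =
        RPP lt lt' ∩ {x | (∀ p ∈ K, x p = 1) ∧ ∀ p ∈ Pstar \ K, x p = 0} ∧
    (∀ x ∈ RPP lt lt',
        (∑ p ∈ (Set.toFinite K).toFinset, x p) -
          (∑ p ∈ (Set.toFinite (Pstar \ K)).toFinset, x p) ≤ (K.ncard : ℝ)) ∧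
    RPPfund lt lt' Pstar K =
      {x ∈ RPP lt lt' |
        (∑ p ∈ (Set.toFinite K).toFinset, x p) -
          (∑ p ∈ (Set.toFinite (Pstar \ K)).toFinset, x p) = (K.ncard : ℝ)}  := by
  classical
  set A := (Set.toFinite K).toFinset with hA
  set B := (Set.toFinite (Pstar \ K)).toFinset with hB
  have hAmem : ∀ p, p ∈ A ↔ p ∈ K := fun p => Set.Finite.mem_toFinset _
  have hBmem : ∀ p, p ∈ B ↔ p ∈ Pstar \ K := fun p => Set.Finite.mem_toFinset _
  have hcard : (A.card : ℝ) = (K.ncard : ℝ) := by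
    rw [Set.ncard_eq_toFinset_card K (Set.toFinite K)]
  set f : (P → ℝ) →ₗ[ℝ] ℝ :=
    (∑ p ∈ A, LinearMap.proj p) - (∑ p ∈ B, LinearMap.proj p) with hf
  have hfval : ∀ x : P → ℝ, f x = (∑ p ∈ A, x p) - (∑ p ∈ B, x p) := by
    intro x; simp [hf]
  have hind01 : ∀ (S : Set P) (p : P), ind S p = 0 ∨ ind S p = 1 := by
    intro S p; by_cases h : p ∈ S <;> simp [ind, h]
  set V : Set (P → ℝ) := {x | ∃ J, IsLowerIdeal lt J ∧ x = ind (maxElems lt' J)} with hV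
  set VK : Set (P → ℝ) :=
    {x | ∃ J, IsLowerIdeal lt J ∧ J ∩ Pstar = K ∧ x = ind (maxElems lt' J)} with hVK
  have hRPP : RPP lt lt' = convexHull ℝ V := rfl
  have hRF : RPPfund lt lt' Pstar K = convexHull ℝ VK := rfl
  have hmaxstar : ∀ (J : Set P) (p : P), p ∈ Pstar → (p ∈ maxElems lt' J ↔ p ∈ J) := by
    intro J p hp
    exact ⟨fun h => h.1, fun hpJ => ⟨hpJ, fun q _ => hiii p hp q⟩⟩
  have hVKpat : ∀ x ∈ VK, (∀ p ∈ K, x p = 1) ∧ ∀ p ∈ Pstar \ K, x p = 0 := by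
    rintro x ⟨J, hJ, hJK, rfl⟩
    constructor
    · intro p hp
      have hpP : p ∈ Pstar := hK.1 hp
      have hpJ : p ∈ J := by
        have : p ∈ J ∩ Pstar := by rw [hJK]; exact hp
        exact this.1
      have hm : p ∈ maxElems lt' J := (hmaxstar J p hpP).2 hpJ
      simp [ind, hm]
    · intro p hp
      have hpJ : p ∉ J := by
        intro h
        exact hp.2 (by rw [← hJK]; exact ⟨h, hp.1⟩)
      have hm : p ∉ maxElems lt' J := fun h => hpJ h.1
      simp [ind, hm]
  have hpatf : ∀ x : P → ℝ, (∀ p ∈ K, x p = 1) → (∀ p ∈ Pstar \ K, x p = 0) →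
      f x = (K.ncard : ℝ) := by
    intro x h1 h0
    rw [hfval]
    have hA1 : ∑ p ∈ A, x p = (A.card : ℝ) := by
      rw [Finset.sum_congr rfl fun p hp => h1 p ((hAmem p).1 hp)]; simp
    have hB1 : ∑ p ∈ B, x p = 0 :=
      Finset.sum_eq_zero fun p hp => h0 p ((hBmem p).1 hp)
    rw [hA1, hB1, hcard, sub_zero]
  have hsumA : ∀ J : Set P, ∑ p ∈ A, ind (maxElems lt' J) p ≤ (A.card : ℝ) := by
    intro J
    calc ∑ p ∈ A, ind (maxElems lt' J) p ≤ ∑ p ∈ A, (1 : ℝ) :=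
          Finset.sum_le_sum fun p _ => by rcases hind01 (maxElems lt' J) p with h | h <;>
            simp [h]
      _ = (A.card : ℝ) := by simp
  have hsumB : ∀ J : Set P, (0 : ℝ) ≤ ∑ p ∈ B, ind (maxElems lt' J) p := by
    intro J
    exact Finset.sum_nonneg fun p _ => by
      rcases hind01 (maxElems lt' J) p with h | h <;> simp [h]
  have hVle : ∀ v ∈ V, f v ≤ (K.ncard : ℝ) := by
    rintro v ⟨J, hJ, rfl⟩
    rw [hfval, ← hcard]
    have := hsumA J
    have := hsumB J
    linarith
  have hVface : ∀ v ∈ V, f v = (K.ncard : ℝ) → v ∈ VK := by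
    rintro v ⟨J, hJ, rfl⟩ hfv
    refine ⟨J, hJ, ?_, rfl⟩
    rw [hfval, ← hcard] at hfv
    have hA1 := hsumA J
    have hB1 := hsumB J
    have hAeq : ∑ p ∈ A, ind (maxElems lt' J) p = (A.card : ℝ) := by linarith
    have hBeq : ∑ p ∈ B, ind (maxElems lt' J) p = 0 := by linarith
    have hvA : ∀ p ∈ A, ind (maxElems lt' J) p = 1 := by
      have hz : ∑ p ∈ A, ((1 : ℝ) - ind (maxElems lt' J) p) = 0 := by
        rw [Finset.sum_sub_distrib, hAeq]; simp
      have h := (Finset.sum_eq_zero_iff_of_nonneg fun p _ => by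
        rcases hind01 (maxElems lt' J) p with h | h <;> simp [h]).1 hz
      intro p hp
      have := h p hp
      linarith
    have hvB : ∀ p ∈ B, ind (maxElems lt' J) p = 0 :=
      (Finset.sum_eq_zero_iff_of_nonneg fun p _ => by
        rcases hind01 (maxElems lt' J) p with h | h <;> simp [h]).1 hBeq
    ext p
    simp only [Set.mem_inter_iff]
    constructor
    · rintro ⟨hpJ, hpP⟩
      by_contra hpK
      have hpB : p ∈ B := (hBmem p).2 ⟨hpP, hpK⟩
      have h0 : ind (maxElems lt' J) p = 0 := hvB p hpB
      have hm : p ∈ maxElems lt' J := (hmaxstar J p hpP).2 hpJ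
      simp [ind, hm] at h0
    · intro hpK
      have hpA : p ∈ A := (hAmem p).2 hpK
      have h1 : ind (maxElems lt' J) p = 1 := hvA p hpA
      have hm : p ∈ maxElems lt' J := by
        by_contra h
        simp [ind, h] at h1
      exact ⟨hm.1, hK.1 hpK⟩
  have hsub : RPPfund lt lt' Pstar K ⊆ RPP lt lt' := by
    rw [hRPP, hRF]
    exact convexHull_mono fun x => by rintro ⟨J, h1, h2, h3⟩; exact ⟨J, h1, h3⟩
  have hPatConv : Convex ℝ {x : P → ℝ | (∀ p ∈ K, x p = 1) ∧ ∀ p ∈ Pstar \ K, x p = 0} := by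
    have heq : {x : P → ℝ | (∀ p ∈ K, x p = 1) ∧ ∀ p ∈ Pstar \ K, x p = 0} =
        (⋂ p ∈ K, {x : P → ℝ | x p = 1}) ∩ ⋂ p ∈ Pstar \ K, {x : P → ℝ | x p = 0} := by
      ext x; simp [Set.mem_iInter]
    rw [heq]
    refine Convex.inter ?_ ?_ <;>
      exact convex_iInter₂ fun p _ => convex_hyperplane
        (⟨fun a b => rfl, fun c a => rfl⟩ : IsLinearMap ℝ fun x : P → ℝ => x p) _
  have hfundPat : RPPfund lt lt' Pstar K ⊆
      {x : P → ℝ | (∀ p ∈ K, x p = 1) ∧ ∀ p ∈ Pstar \ K, x p = 0} := by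
    rw [hRF]
    exact convexHull_min hVKpat hPatConv
  have hle : ∀ x ∈ RPP lt lt', f x ≤ (K.ncard : ℝ) := by
    intro x hx
    rw [hRPP] at hx
    exact convexHull_min hVle (convex_halfSpace_le (LinearMap.isLinear f) _) hx
  have hface : ∀ x, x ∈ RPP lt lt' → f x = (K.ncard : ℝ) → x ∈ RPPfund lt lt' Pstar K := by
    intro x hx hfx
    rw [hRPP] at hx
    have h := hull_face_aux f (K.ncard : ℝ) V hVle hx hfx
    rw [hRF]
    exact convexHull_mono (fun v hv => hVface v hv.1 hv.2) h
  refine ⟨?_, ?_, ?_⟩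
  · apply Set.Subset.antisymm
    · exact fun x hx => ⟨hsub hx, hfundPat hx⟩
    · rintro x ⟨hx, h1, h0⟩
      exact hface x hx (hpatf x h1 h0)
  · intro x hx
    have h := hle x hx
    rwa [hfval] at h
  · apply Set.Subset.antisymm
    · intro x hx
      refine ⟨hsub hx, ?_⟩
      obtain ⟨h1, h0⟩ := hfundPat hx
      have h := hpatf x h1 h0
      rwa [hfval] at h
    · rintro x ⟨hx, heq⟩
      exact hface x hx (by rw [hfval]; exact heq)
end

section
/- Let (P,<) be a finite poset, let P* ⊆ P be a subset containing all minimal and all maximal elements of (P,<), and let P∖P* = C ⊔ O be a partition. Define a relation <' on P by: p <' q if and only if p < q and p ∉ P* ∪ O. Then <' is a partial order on P weaker than <, and the set 𝒥(P,<) of order ideals of (P,<) is closed under *_{<'}: for all order ideals J1, J2 of (P,<), the set J1 *_{<'} J2 is again an order ideal of (P,<). -/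
open Pointwise

/-- Let `(P, lt)` be a finite poset, `P*` a subset containing all minimal and maximal
elements, and `P ∖ P* = C ⊔ O` a partition.  Define `p <' q ↔ p < q ∧ p ∉ P* ∪ O`.
Then `<'` is a partial order weaker than `lt`, and the set of order ideals of `(P, lt)` is
closed under `*_{<'}`. -/
theorem stmt17 {P : Type*} [Fintype P] (lt : P → P → Prop)
    (hirr : ∀ p, ¬ lt p p) (htr : ∀ a b c, lt a b → lt b c → lt a c)
    (Pstar C O : Set P)
    (hmin : ∀ p : P, (∀ q, ¬ lt q p) → p ∈ Pstar)
    (hmax : ∀ p : P, (∀ q, ¬ lt p q) → p ∈ Pstar)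
    (hCO : C ∪ O = Pstarᶜ) (hdisj : C ∩ O = ∅)
    (lt' : P → P → Prop)
    (hlt' : ∀ p q, lt' p q ↔ (lt p q ∧ p ∉ Pstar ∪ O)) :
    (∀ p, ¬ lt' p p) ∧
    (∀ a b c, lt' a b → lt' b c → lt' a c) ∧
    (∀ p q, lt' p q → lt p q) ∧
    (∀ J1 J2 : Set P, IsLowerIdeal lt J1 → IsLowerIdeal lt J2 →
      IsLowerIdeal lt (starOp lt' J1 J2)) := by
  refine ⟨?_, ?_, ?_, ?_⟩
  · intro p hp
    exact hirr p ((hlt' p p).1 hp).1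
  · intro a b c hab hbc
    rw [hlt'] at hab hbc ⊢
    exact ⟨htr a b c hab.1 hbc.1, hab.2⟩
  · intro p q h
    exact ((hlt' p q).1 h).1
  · intro J1 J2 hJ1 hJ2 p x hpx hx
    obtain ⟨q, hqA, hq⟩ := hx
    have hpq : lt p q := by
      rcases hq with rfl | h
      · exact hpx
      · exact htr _ _ _ hpx ((hlt' _ _).1 h).1
    by_cases hp : p ∈ Pstar ∪ O
    · have hpJ1 : p ∈ J1 := hJ1 hpq hqA.1.1
      have hpJ2 : p ∈ J2 := hJ2 hpq hqA.1.2
      refine ⟨p, ⟨⟨hpJ1, hpJ2⟩, Or.inl ⟨hpJ1, ?_⟩⟩, Or.inl rfl⟩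
      intro r _ hr
      exact ((hlt' p r).1 hr).2 hp
    · exact ⟨q, hqA, Or.inr ((hlt' p q).2 ⟨hpq, hp⟩)⟩
end

section
/- Let (P,<) be a finite poset, P* ⊆ P a subset containing all minimal and all maximal elements of (P,<), P∖P* = C ⊔ O a partition, and K an order ideal of (P*,<). Then the marked chain-order polytope O_{C,O}(P,<,ω_K) equals the convex hull of the points 1_{A(J)}, where J ranges over the order ideals of (P,<) with J ∩ P* = K and A(J) = (J ∩ (P* ∪ O)) ∪ max_< J. -/
open Pointwise

/-- The marked chain-order polytope `O_{C,O}(P, lt, λ)` for a real marking `lam`: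
points `x` with `x_p = λ_p` on `P*`, `x_p ≥ 0` on `C`, and
`x_{p_1} + ⋯ + x_{p_r} ≤ x_a − x_b` for every chain `a < p_1 < ⋯ < p_r < b` (`r ≥ 0`)
with `a, b ∈ P* ∪ O` and all `p_i ∈ C`. -/
def MCOP {P : Type*} (lt : P → P → Prop) (Pstar C O : Set P) (lam : P → ℝ) :
    Set (P → ℝ) :=
  {x | (∀ p ∈ Pstar, x p = lam p) ∧ (∀ p ∈ C, 0 ≤ x p) ∧
    ∀ (r : ℕ) (a b : P) (c : Fin r → P),
      a ∈ Pstar ∪ O → b ∈ Pstar ∪ O → (∀ i, c i ∈ C) →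
      lt a b → (∀ i, lt a (c i) ∧ lt (c i) b) →
      (∀ i j : Fin r, i < j → lt (c i) (c j)) →
      (∑ i, x (c i)) ≤ x a - x b}

/-!
The vertices `1_{A(J)}` lie in the polytope because a chain of `C` meets `max J` at most once,
and then its endpoints `a`, `b` satisfy `a ∈ J`, `b ∉ J`.

Conversely, lift `x ∈ O_{C,O}(P, ω_K)` to `y`, where `y p` is the largest value of
`x c₀ + ⋯ + x c_r + x b` over chains `p = c₀ < ⋯ < c_r < b` with all `cᵢ ∈ C` and `b ∉ C`.
The chain inequalities make `y` antitone, and since minimal and maximal elements are marked,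
`0 ≤ y ≤ 1`. Hence `y` is a convex combination of the indicators of its superlevel sets
`J_t = {y ≥ t}`, `0 < t ≤ 1`, which are order ideals with `J_t ∩ P* = K`. Choosing for each
`p ∈ C` an element `s p > p` at which `y` is largest above `p`, the linear map
`z ↦ (p ↦ z p - z (s p) on C, z p elsewhere)` sends `y` to `x` and `1_{J_t}` to `1_{A(J_t)}`.
-/

open Set

section Vertices

variable {P : Type*} {lt : P → P → Prop} {Pstar C O : Set P}

theorem ind_apply (A : Set P) (p : P) [Decidable (p ∈ A)] :
    ind A p = if p ∈ A then 1 else 0 :=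
  Set.indicator_apply A 1 p

theorem convex_MCOP (lam : P → ℝ) : Convex ℝ (MCOP lt Pstar C O lam) := by
  rintro u ⟨hu_mark, hu_nonneg, hu_chain⟩ v ⟨hv_mark, hv_nonneg, hv_chain⟩ s t hs ht hst
  refine ⟨fun p hp => ?_, fun p hp => ?_, fun r a b c ha hb hc hab hacb hchain => ?_⟩
  · simp only [Pi.add_apply, Pi.smul_apply, smul_eq_mul, hu_mark p hp, hv_mark p hp, ← add_mul,
      hst, one_mul]
  · exact add_nonneg (mul_nonneg hs (hu_nonneg p hp)) (mul_nonneg ht (hv_nonneg p hp))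
  · have hu := mul_le_mul_of_nonneg_left (hu_chain r a b c ha hb hc hab hacb hchain) hs
    have hv := mul_le_mul_of_nonneg_left (hv_chain r a b c ha hb hc hab hacb hchain) ht
    simp only [Pi.add_apply, Pi.smul_apply, smul_eq_mul, Finset.sum_add_distrib, ← Finset.mul_sum]
    linarith

theorem sum_map_le_of_mem_MCOP {lam x : P → ℝ} (hx : x ∈ MCOP lt Pstar C O lam) {a b : P}
    (ha : a ∈ Pstar ∪ O) (hb : b ∈ Pstar ∪ O) (hab : lt a b) {l : List P} (hl : l.Pairwise lt)
    (hlC : ∀ c ∈ l, c ∈ C ∧ lt a c ∧ lt c b) : (l.map x).sum ≤ x a - x b := by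
  rw [← Fin.sum_univ_fun_getElem]
  exact hx.2.2 l.length a b (fun i => l[i]) ha hb (fun i => (hlC _ (List.getElem_mem _)).1) hab
    (fun i => (hlC _ (List.getElem_mem _)).2)
    (fun i j hij => List.pairwise_iff_getElem.1 hl _ _ _ _ hij)

theorem eq_of_mem_maxElems {J : Set P} {r : ℕ} {c : Fin r → P}
    (hc : ∀ i j, i < j → lt (c i) (c j)) {i j : Fin r}
    (hi : c i ∈ maxElems lt J) (hj : c j ∈ maxElems lt J) : i = j := by
  rcases lt_trichotomy i j with h | h | h
  · exact (hi.2 _ hj.1 (hc i j h)).elim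
  · exact h
  · exact (hj.2 _ hi.1 (hc j i h)).elim

/-- The set `A(J)` of the paper. -/
def vertexSupport (lt : P → P → Prop) (Pstar O J : Set P) : Set P :=
  (J ∩ (Pstar ∪ O)) ∪ maxElems lt J

theorem mem_vertexSupport_iff_of_mem {J : Set P} {p : P} (hp : p ∈ Pstar ∪ O) :
    p ∈ vertexSupport lt Pstar O J ↔ p ∈ J :=
  ⟨fun h => h.elim (·.1) (·.1), fun h => Or.inl ⟨h, hp⟩⟩

theorem mem_vertexSupport_iff_of_notMem {J : Set P} {p : P} (hp : p ∉ Pstar ∪ O) :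
    p ∈ vertexSupport lt Pstar O J ↔ p ∈ maxElems lt J :=
  ⟨fun h => h.elim (fun h => (hp h.2).elim) id, Or.inr⟩

theorem sum_ind_vertexSupport_le (hC : Disjoint C (Pstar ∪ O)) {J : Set P}
    (hJ : IsLowerIdeal lt J) {a b : P} (ha : a ∈ Pstar ∪ O) (hb : b ∈ Pstar ∪ O) (hab : lt a b)
    {r : ℕ} {c : Fin r → P} (hc : ∀ i, c i ∈ C) (hacb : ∀ i, lt a (c i) ∧ lt (c i) b)
    (hchain : ∀ i j, i < j → lt (c i) (c j)) :
    ∑ i, ind (vertexSupport lt Pstar O J) (c i) ≤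
      ind (vertexSupport lt Pstar O J) a - ind (vertexSupport lt Pstar O J) b := by
  classical
  have hcA : ∀ i, c i ∈ vertexSupport lt Pstar O J ↔ c i ∈ maxElems lt J := fun i =>
    mem_vertexSupport_iff_of_notMem (hC.notMem_of_mem_left (hc i))
  simp only [ind_apply, mem_vertexSupport_iff_of_mem ha, mem_vertexSupport_iff_of_mem hb, hcA]
  by_cases hmax : ∃ i, c i ∈ maxElems lt J
  · obtain ⟨i, hi⟩ := hmax
    rw [Finset.sum_eq_single i
        (fun j _ hji => if_neg fun hj => hji (eq_of_mem_maxElems hchain hj hi)) (by simp),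
      if_pos hi, if_pos (hJ (hacb i).1 hi.1), if_neg fun hbJ => hi.2 b hbJ (hacb i).2]
    norm_num
  · simp only [not_exists] at hmax
    rw [Finset.sum_eq_zero fun j _ => if_neg (hmax j), sub_nonneg]
    by_cases hbJ : b ∈ J
    · rw [if_pos hbJ, if_pos (hJ hab hbJ)]
    · rw [if_neg hbJ]
      split_ifs <;> norm_num

theorem ind_mem_MCOP (hC : Disjoint C (Pstar ∪ O)) {J K : Set P} (hJ : IsLowerIdeal lt J)
    (hJK : J ∩ Pstar = K) :
    ind (vertexSupport lt Pstar O J) ∈ MCOP lt Pstar C O (K.indicator 1) := by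
  classical
  refine ⟨fun p hp => ?_, fun p _ => Set.indicator_nonneg (fun _ _ => zero_le_one) p,
    fun r a b c ha hb hc hab hacb hchain =>
      sum_ind_vertexSupport_le hC hJ ha hb hab hc hacb hchain⟩
  rw [ind_apply, Set.indicator_apply, mem_vertexSupport_iff_of_mem (Or.inl hp), ← hJK]
  simp [hp]

end Vertices

theorem Finset.exists_strictMonoOn_Iic_surj {α : Type*} [LinearOrder α] (T : Finset α)
    (hT : T.Nonempty) :
    ∃ (m : ℕ) (u : ℕ → α), StrictMonoOn u (Set.Iic m) ∧ (∀ j, u j ∈ T) ∧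
      ∀ v ∈ T, ∃ k ≤ m, u k = v := by
  obtain ⟨m, hm⟩ : ∃ m, T.card = m + 1 := ⟨T.card - 1, by have := hT.card_pos; omega⟩
  refine ⟨m, fun j => T.orderEmbOfFin hm (Fin.clamp j m), fun i hi j hj hij => ?_,
    fun j => T.orderEmbOfFin_mem hm _, fun v hv => ?_⟩
  · refine (T.orderEmbOfFin hm).strictMono ?_
    simp only [Fin.lt_def, Fin.clamp, Set.mem_Iic] at hi hj ⊢
    omega
  · obtain ⟨i, rfl⟩ : v ∈ Set.range (T.orderEmbOfFin hm) := by
      rwa [Finset.range_orderEmbOfFin]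
    refine ⟨i, by omega, congrArg _ (Fin.ext ?_)⟩
    simp only [Fin.clamp]
    omega

theorem sum_range_ite_le_eq_sub {u : ℕ → ℝ} {m k : ℕ} (hu : StrictMonoOn u (Iic m)) (hk : k ≤ m) :
    ∑ j ∈ Finset.range m, (if u (j + 1) ≤ u k then u (j + 1) - u j else 0) = u k - u 0 := by
  calc ∑ j ∈ Finset.range m, (if u (j + 1) ≤ u k then u (j + 1) - u j else 0)
      = ∑ j ∈ Finset.range k, (if u (j + 1) ≤ u k then u (j + 1) - u j else 0) := by
        refine (Finset.sum_subset (Finset.range_subset_range.2 hk) fun j hjm hjk => ?_).symm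
        simp only [Finset.mem_range, not_lt] at hjm hjk
        exact if_neg (not_le.2 (hu (mem_Iic.2 hk) (mem_Iic.2 hjm) (by omega)))
    _ = ∑ j ∈ Finset.range k, (u (j + 1) - u j) := by
        refine Finset.sum_congr rfl fun j hj => if_pos ?_
        have hjk := Finset.mem_range.1 hj
        exact hu.monotoneOn (mem_Iic.2 (by omega)) (mem_Iic.2 hk) hjk
    _ = u k - u 0 := Finset.sum_range_sub u k

theorem mem_convexHull_ind_superlevel {P : Type*} [Finite P] (y : P → ℝ)
    (hy : ∀ p, y p ∈ Icc 0 1) :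
    y ∈ convexHull ℝ ((fun t => ind {p | t ≤ y p}) '' Ioc 0 1) := by
  classical
  set T : Finset ℝ := insert 0 (insert 1 (Set.finite_range y).toFinset)
  have hT : ∀ v ∈ T, v ∈ Icc (0 : ℝ) 1 := by
    simp only [T, Finset.mem_insert, Set.Finite.mem_toFinset, Set.mem_range]
    rintro v (rfl | rfl | ⟨p, rfl⟩)
    exacts [⟨le_rfl, zero_le_one⟩, ⟨zero_le_one, le_rfl⟩, hy p]
  obtain ⟨m, u, hu, huT, hTu⟩ := T.exists_strictMonoOn_Iic_surj (Finset.insert_nonempty _ _)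
  obtain ⟨k₀, hk₀, hu₀⟩ := hTu 0 (by simp [T])
  obtain ⟨k₁, hk₁, hu₁⟩ := hTu 1 (by simp [T])
  have hu0 : u 0 = 0 :=
    le_antisymm (hu₀ ▸ hu.monotoneOn (mem_Iic.2 (Nat.zero_le m)) (mem_Iic.2 hk₀) (Nat.zero_le k₀))
      (hT _ (huT 0)).1
  have hum : u m = 1 :=
    le_antisymm (hT _ (huT m)).2 (hu₁ ▸ hu.monotoneOn (mem_Iic.2 hk₁) (mem_Iic.2 le_rfl) hk₁)
  have hy_eq : y = ∑ j ∈ Finset.range m, (u (j + 1) - u j) • ind {p | u (j + 1) ≤ y p} := by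
    funext p
    obtain ⟨k, hk, hkp⟩ := hTu (y p) (by simp [T])
    simp only [Finset.sum_apply, Pi.smul_apply, smul_eq_mul, ind_apply, Set.mem_ofPred_eq,
      mul_ite, mul_one, mul_zero]
    rw [← hkp, sum_range_ite_le_eq_sub hu hk, hu0, sub_zero]
  have hj' : ∀ j ∈ Finset.range m, j + 1 ∈ Iic m := fun j hj => mem_Iic.2 (Finset.mem_range.1 hj)
  have hstep : ∀ j ∈ Finset.range m, u j < u (j + 1) := fun j hj =>
    hu (mem_Iic.2 (Nat.le_of_succ_le (hj' j hj))) (hj' j hj) j.lt_succ_self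
  rw [hy_eq]
  refine (convex_convexHull ℝ _).sum_mem (fun j hj => sub_nonneg.2 (hstep j hj).le)
    (by rw [Finset.sum_range_sub, hum, hu0, sub_zero]) fun j hj => subset_convexHull ℝ _ ?_
  exact ⟨u (j + 1), ⟨hu0 ▸ hu (mem_Iic.2 (Nat.zero_le m)) (hj' j hj) j.succ_pos,
    (hT _ (huT _)).2⟩, by rw [← hy_eq]⟩


theorem List.Pairwise.cons_of_lt {P : Type*} [Preorder P] {p q : P} {l : List P} (hpq : p < q)
    (hl : (q :: l).Pairwise (· < ·)) : (p :: q :: l).Pairwise (· < ·) :=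
  hl.cons (List.forall_mem_cons.2 ⟨hpq, fun _ hc => hpq.trans (List.rel_of_pairwise_cons hl hc)⟩)

section MaxChainSum

variable {P : Type*} [PartialOrder P] [Finite P] {C : Set P} {x : P → ℝ} {p : P}

open scoped Classical in
/-- `maxChainSum C x p` is the largest value of `x c₀ + ⋯ + x c_r + x b` over the chains
`p = c₀ < ⋯ < c_r < b` with all `cᵢ ∈ C` and `b ∉ C` (for `p ∉ C` it is `x p`). -/
noncomputable def maxChainSum (C : Set P) (x : P → ℝ) : P → ℝ :=
  wellFounded_gt.fix fun p rec => if p ∈ C then x p + ⨆ q : Ioi p, rec q q.2 else x p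

theorem maxChainSum_of_notMem (hp : p ∉ C) : maxChainSum C x p = x p := by
  rw [maxChainSum, WellFounded.fix_eq, if_neg hp]

theorem maxChainSum_of_mem (hp : p ∈ C) :
    maxChainSum C x p = x p + ⨆ q : Ioi p, maxChainSum C x q := by
  rw [maxChainSum, WellFounded.fix_eq, if_pos hp]

theorem exists_maxChainSum_eq_add (hp : p ∈ C) (hne : (Ioi p).Nonempty) :
    ∃ q, p < q ∧ maxChainSum C x p = x p + maxChainSum C x q ∧
      ∀ q', p < q' → maxChainSum C x q' ≤ maxChainSum C x q := by
  have : Nonempty (Ioi p) := hne.to_subtype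
  obtain ⟨⟨q, hpq⟩, hq⟩ := exists_eq_ciSup_of_finite (f := fun q : Ioi p => maxChainSum C x q)
  refine ⟨q, hpq, by rw [maxChainSum_of_mem hp, hq], fun q' hpq' => ?_⟩
  rw [hq]
  exact le_ciSup (Finite.bddAbove_range fun q : Ioi p => maxChainSum C x q) ⟨q', hpq'⟩

theorem exists_succ_maxChainSum (hC : ∀ p ∈ C, (Ioi p).Nonempty) :
    ∃ s : P → P, ∀ p ∈ C, p < s p ∧ maxChainSum C x p = x p + maxChainSum C x (s p) ∧
      ∀ q, p < q → maxChainSum C x q ≤ maxChainSum C x (s p) := by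
  have : ∀ p, ∃ q, p ∈ C → p < q ∧ maxChainSum C x p = x p + maxChainSum C x q ∧
      ∀ q', p < q' → maxChainSum C x q' ≤ maxChainSum C x q := fun p => by
    by_cases hp : p ∈ C
    · obtain ⟨q, hq⟩ := exists_maxChainSum_eq_add hp (hC p hp)
      exact ⟨q, fun _ => hq⟩
    · exact ⟨p, fun h => absurd h hp⟩
  choose s hs using this
  exact ⟨s, hs⟩

theorem exists_chain_maxChainSum_eq (hC : ∀ p ∈ C, (Ioi p).Nonempty) (hp : p ∈ C) :
    ∃ (l : List P) (b : P), (p :: l).Pairwise (· < ·) ∧ (∀ c ∈ p :: l, c ∈ C ∧ c < b) ∧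
      b ∉ C ∧ maxChainSum C x p = ((p :: l).map x).sum + x b := by
  induction p using WellFoundedGT.induction with
  | _ p ih =>
  obtain ⟨q, hpq, hp_eq, -⟩ := exists_maxChainSum_eq_add (x := x) hp (hC p hp)
  by_cases hq : q ∈ C
  · obtain ⟨l, b, hl, hlb, hb, hq_eq⟩ := ih q hpq hq
    refine ⟨q :: l, b, hl.cons_of_lt hpq, List.forall_mem_cons.2
      ⟨⟨hp, hpq.trans (hlb q List.mem_cons_self).2⟩, hlb⟩, hb, ?_⟩
    simp only [hp_eq, hq_eq, List.map_cons, List.sum_cons, add_assoc]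
  · exact ⟨[], q, List.pairwise_singleton _ _, by simpa using ⟨hp, hpq⟩, hq,
      by simp [hp_eq, maxChainSum_of_notMem hq]⟩

end MaxChainSum

section MarkedOrder

variable {P : Type*} [PartialOrder P] [Finite P] {Pstar C O : Set P} {lam x : P → ℝ}

theorem maxChainSum_le_of_lt (hC : Cᶜ = Pstar ∪ O) (hCmax : ∀ p ∈ C, (Ioi p).Nonempty)
    (hx : x ∈ MCOP (· < ·) Pstar C O lam) {a q : P} (ha : a ∉ C) (hq : q ∈ C) (haq : a < q) :
    maxChainSum C x q ≤ x a := by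
  obtain ⟨l, b, hl, hlb, hb, hq_eq⟩ := exists_chain_maxChainSum_eq (x := x) hCmax hq
  have hal : ∀ c ∈ q :: l, a < c := fun _ hc => List.rel_of_pairwise_cons (hl.cons_of_lt haq) hc
  have := sum_map_le_of_mem_MCOP hx (hC.le ha) (hC.le hb)
    (haq.trans (hlb q List.mem_cons_self).2) hl fun c hc => ⟨(hlb c hc).1, hal c hc, (hlb c hc).2⟩
  linarith

theorem antitone_maxChainSum (hC : Cᶜ = Pstar ∪ O) (hCmax : ∀ p ∈ C, (Ioi p).Nonempty)
    (hx : x ∈ MCOP (· < ·) Pstar C O lam) : Antitone (maxChainSum C x) := by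
  intro p q hpq
  obtain rfl | hpq := hpq.eq_or_lt
  · exact le_rfl
  by_cases hp : p ∈ C
  · obtain ⟨s, -, hs_eq, hs_max⟩ := exists_maxChainSum_eq_add (x := x) hp ⟨q, hpq⟩
    linarith [hs_max q hpq, hx.2.1 p hp]
  rw [maxChainSum_of_notMem hp]
  by_cases hq : q ∈ C
  · exact maxChainSum_le_of_lt hC hCmax hx hp hq hpq
  · have := sum_map_le_of_mem_MCOP hx (hC.le hp) (hC.le hq) hpq List.Pairwise.nil (by simp)
    rw [maxChainSum_of_notMem hq]
    simpa using this

theorem mem_Icc_of_antitone {Pstar : Set P} {y : P → ℝ} (hy : Antitone y)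
    (hmin : ∀ p : P, (∀ q, ¬ q < p) → p ∈ Pstar) (hmax : ∀ p : P, (∀ q, ¬ p < q) → p ∈ Pstar)
    (hPstar : ∀ p ∈ Pstar, y p ∈ Icc 0 1) (p : P) : y p ∈ Icc 0 1 := by
  obtain ⟨m, hmp, hm⟩ := exists_minimal_le_of_wellFoundedLT (fun _ => True) p trivial
  obtain ⟨M, hpM, hM⟩ := exists_maximal_ge_of_wellFoundedGT (fun _ => True) p trivial
  exact ⟨(hPstar M (hmax M fun _ => (maximal_true.1 hM).not_lt)).1.trans (hy hpM),
    (hy hmp).trans (hPstar m (hmin m fun _ => (minimal_true.1 hm).not_lt)).2⟩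

end MarkedOrder

section Transfer

variable {P : Type*} {lt : P → P → Prop} {Pstar C O : Set P} {s : P → P}

open scoped Classical in
noncomputable def succDiff (C : Set P) (s : P → P) : (P → ℝ) →ₗ[ℝ] P → ℝ where
  toFun z p := if p ∈ C then z p - z (s p) else z p
  map_add' z w := by
    ext p
    by_cases hp : p ∈ C <;> simp [hp]
    ring
  map_smul' c z := by
    ext p
    by_cases hp : p ∈ C <;> simp [hp, mul_sub]

theorem succDiff_apply_of_mem {z : P → ℝ} {p : P} (hp : p ∈ C) :
    succDiff C s z p = z p - z (s p) :=
  if_pos hp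

theorem succDiff_apply_of_notMem {z : P → ℝ} {p : P} (hp : p ∉ C) : succDiff C s z p = z p :=
  if_neg hp

theorem mem_maxElems_iff {J : Set P} {p q : P} (hpq : lt p q)
    (hq : ∀ q', lt p q' → q' ∈ J → q ∈ J) : p ∈ maxElems lt J ↔ p ∈ J ∧ q ∉ J :=
  ⟨fun h => ⟨h.1, fun hqJ => h.2 q hqJ hpq⟩,
    fun h => ⟨h.1, fun q' hq' hpq' => h.2 (hq q' hpq' hq')⟩⟩

theorem succDiff_ind (hC : Cᶜ = Pstar ∪ O) {J : Set P} (hJ : IsLowerIdeal lt J)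
    (hs : ∀ p ∈ C, lt p (s p) ∧ ∀ q, lt p q → q ∈ J → s p ∈ J) :
    succDiff C s (ind J) = ind (vertexSupport lt Pstar O J) := by
  classical
  ext p
  by_cases hp : p ∈ C
  · rw [succDiff_apply_of_mem hp, ind_apply, ind_apply, ind_apply,
      mem_vertexSupport_iff_of_notMem fun h => hC.ge h hp, mem_maxElems_iff (hs p hp).1 (hs p hp).2]
    by_cases hsJ : s p ∈ J
    · simp [hsJ, hJ (hs p hp).1 hsJ]
    · by_cases hpJ : p ∈ J <;> simp [hsJ, hpJ]
  · rw [succDiff_apply_of_notMem hp, ind_apply, ind_apply, mem_vertexSupport_iff_of_mem (hC.le hp)]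

end Transfer

theorem superlevel_inter_eq {P : Type*} {Pstar K : Set P} (hK : K ⊆ Pstar) {y : P → ℝ}
    (hy : ∀ p ∈ Pstar, y p = K.indicator 1 p) {t : ℝ} (ht : t ∈ Ioc 0 1) :
    {p | t ≤ y p} ∩ Pstar = K := by
  ext p
  refine ⟨fun ⟨htp, hp⟩ => ?_, fun hpK => ⟨?_, hK hpK⟩⟩
  · by_contra hpK
    rw [Set.mem_ofPred_eq, hy p hp, Set.indicator_of_notMem hpK] at htp
    exact ht.1.not_ge htp
  · rw [Set.mem_ofPred_eq, hy p (hK hpK), Set.indicator_of_mem hpK]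
    exact ht.2

theorem MCOP_subset_convexHull {P : Type*} [PartialOrder P] [Finite P] {Pstar C O K : Set P}
    (hC : Cᶜ = Pstar ∪ O) (hmin : ∀ p : P, (∀ q, ¬ q < p) → p ∈ Pstar)
    (hmax : ∀ p : P, (∀ q, ¬ p < q) → p ∈ Pstar) (hK : K ⊆ Pstar) :
    MCOP (· < ·) Pstar C O (K.indicator 1) ⊆ convexHull ℝ {x | ∃ J : Set P,
      IsLowerIdeal (· < ·) J ∧ J ∩ Pstar = K ∧ x = ind (vertexSupport (· < ·) Pstar O J)} := by
  intro x hx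
  have hCmax : ∀ p ∈ C, (Ioi p).Nonempty := fun p hp => by
    by_contra h
    exact hC.ge (Or.inl (hmax p fun q hq => h ⟨q, hq⟩)) hp
  obtain ⟨s, hs⟩ := exists_succ_maxChainSum (x := x) hCmax
  set y := maxChainSum C x
  have hy_anti : Antitone y := antitone_maxChainSum hC hCmax hx
  have hy_mark : ∀ p ∈ Pstar, y p = K.indicator 1 p := fun p hp =>
    (maxChainSum_of_notMem (hC.ge (Or.inl hp))).trans (hx.1 p hp)
  have hy_Icc := mem_Icc_of_antitone hy_anti hmin hmax fun p hp => hy_mark p hp ▸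
    ⟨Set.indicator_nonneg (fun _ _ => zero_le_one) p,
      Set.indicator_le_self' (fun _ _ => zero_le_one) p⟩
  have hx_eq : succDiff C s y = x := by
    ext p
    by_cases hp : p ∈ C
    · rw [succDiff_apply_of_mem hp, (hs p hp).2.1, add_sub_cancel_right]
    · rw [succDiff_apply_of_notMem hp]
      exact maxChainSum_of_notMem hp
  rw [← hx_eq]
  refine convexHull_mono ?_ (LinearMap.image_convexHull (succDiff C s) _ ▸
    mem_image_of_mem _ (mem_convexHull_ind_superlevel y hy_Icc))
  rintro _ ⟨_, ⟨t, ht, rfl⟩, rfl⟩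
  have hJ : IsLowerIdeal (· < ·) {p | t ≤ y p} := fun p q hpq hq => le_trans hq (hy_anti hpq.le)
  exact ⟨_, hJ, superlevel_inter_eq hK hy_mark ht, (succDiff_ind hC hJ fun p hp =>
    ⟨(hs p hp).1, fun q hpq hq => le_trans hq ((hs p hp).2.2 q hpq)⟩)⟩

/-- For an order ideal `K` of `(P*, lt)`, the marked chain-order polytope
`O_{C,O}(P, lt, ω_K)` is the convex hull of the points `1_{A(J)}`, where `J` ranges over
order ideals of `(P, lt)` with `J ∩ P* = K` and `A(J) = (J ∩ (P* ∪ O)) ∪ max_lt J`. -/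
theorem stmt18 {P : Type*} [Fintype P] (lt : P → P → Prop)
    (hirr : ∀ p, ¬ lt p p) (htr : ∀ a b c, lt a b → lt b c → lt a c)
    (Pstar C O : Set P)
    (hmin : ∀ p : P, (∀ q, ¬ lt q p) → p ∈ Pstar)
    (hmax : ∀ p : P, (∀ q, ¬ lt p q) → p ∈ Pstar)
    (hCO : C ∪ O = Pstarᶜ) (hdisj : C ∩ O = ∅)
    (K : Set P) (hK : K ∈ idealsOn lt Pstar) :
    MCOP lt Pstar C O (K.indicator 1) =
      convexHull ℝ
        {x | ∃ J : Set P, IsLowerIdeal lt J ∧ J ∩ Pstar = K ∧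
          x = ind ((J ∩ (Pstar ∪ O)) ∪ maxElems lt J)} := by
  have : IsStrictOrder P lt := { irrefl := hirr, trans := htr }
  let _ : PartialOrder P := partialOrderOfSO lt
  have hC : Cᶜ = Pstar ∪ O := by
    ext p
    have h₁ := Set.ext_iff.1 hCO p
    have h₂ := Set.ext_iff.1 hdisj p
    simp only [mem_union, mem_compl_iff, mem_inter_iff, mem_empty_iff_false] at h₁ h₂ ⊢
    tauto
  refine (MCOP_subset_convexHull hC hmin hmax hK.1).antisymm (convexHull_min ?_ (convex_MCOP _))
  rintro _ ⟨J, hJ, hJK, rfl⟩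
  exact ind_mem_MCOP (hC ▸ disjoint_compl_right) hJ hJK
end
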